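/- If n and m are positive integers with the same parity and m > n, then there is no tatami covering of the n×n grid using exactly m monominoes (and dominoes elsewhere). -/

import Mathlib

open scoped Classical

/-- A cell `(i, j)` lies in row `i` and column `j`. -/
abbrev Cell : Type := ℤ × ℤ

/-- A tile: a monomino, a horizontal domino (covering `(i,j)` and `(i,j+1)`),
or a vertical domino (covering `(i,j)` and `(i+1,j)`), identified by its
top-left cell. -/
inductive Tile : Type where
  | mono : Cell → Tile
  | hdom : Cell → Tile
  | vdom : Cell → Tile
deriving DecidableEq

/-- The set of cells covered by a tile. -/
def Tile.cells : Tile → Finset Cell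
  | .mono c => {c}
  | .hdom c => {c, (c.1, c.2 + 1)}
  | .vdom c => {c, (c.1 + 1, c.2)}

def Tile.IsMono : Tile → Prop
  | .mono _ => True
  | _ => False

def Tile.IsHoriz : Tile → Prop
  | .hdom _ => True
  | _ => False

def Tile.IsVert : Tile → Prop
  | .vdom _ => True
  | _ => False

def Tile.IsDomino : Tile → Prop
  | .mono _ => False
  | _ => True

/-- The `r × c` grid of cells (r rows, c columns). -/
noncomputable def grid (r c : ℕ) : Finset Cell :=
  Finset.Ico (0 : ℤ) (r : ℤ) ×ˢ Finset.Ico (0 : ℤ) (c : ℤ)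

/-- The four cells incident to the grid vertex `v` (the lattice point `v`,
viewed as the common corner of these four cells). -/
def vtxCells (v : Cell) : Finset Cell :=
  {(v.1 - 1, v.2 - 1), (v.1 - 1, v.2), (v.1, v.2 - 1), v}

/-- Four pairwise distinct tiles of `T` meet at the grid vertex `v`:
the four cells incident to `v` are covered by four distinct tiles. -/
def FourMeet (T : Finset Tile) (v : Cell) : Prop :=
  ∃ t₁ ∈ T, ∃ t₂ ∈ T, ∃ t₃ ∈ T, ∃ t₄ ∈ T,
    (v.1 - 1, v.2 - 1) ∈ t₁.cells ∧ (v.1 - 1, v.2) ∈ t₂.cells ∧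
    (v.1, v.2 - 1) ∈ t₃.cells ∧ v ∈ t₄.cells ∧
    t₁ ≠ t₂ ∧ t₁ ≠ t₃ ∧ t₁ ≠ t₄ ∧ t₂ ≠ t₃ ∧ t₂ ≠ t₄ ∧ t₃ ≠ t₄

/-- `T` is a covering (partition into tiles) of the region `R`. -/
def IsCovering (T : Finset Tile) (R : Finset Cell) : Prop :=
  (∀ t₁ ∈ T, ∀ t₂ ∈ T, t₁ ≠ t₂ → Disjoint t₁.cells t₂.cells) ∧
  (∀ x : Cell, x ∈ R ↔ ∃ t ∈ T, x ∈ t.cells)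

/-- `T` is a tatami covering of `R`: a covering in which no four tiles meet
at any grid vertex. -/
def IsTatami (T : Finset Tile) (R : Finset Cell) : Prop :=
  IsCovering T R ∧ ∀ v : Cell, ¬ FourMeet T v

/-- The number of monominoes in `T`. -/
noncomputable def monoCount (T : Finset Tile) : ℕ :=
  (T.filter Tile.IsMono).card

/-- The number of vertical dominoes in `T`. -/
noncomputable def vertCount (T : Finset Tile) : ℕ :=
  (T.filter Tile.IsVert).card

/-- `v` is an interior grid vertex of the region `R`: all four incident
cells belong to `R`. -/
def InteriorVtx (R : Finset Cell) (v : Cell) : Prop :=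
  (v.1 - 1, v.2 - 1) ∈ R ∧ (v.1 - 1, v.2) ∈ R ∧ (v.1, v.2 - 1) ∈ R ∧ v ∈ R

-- ## auxiliary development

def Same (T : Finset Tile) (x y : Cell) : Prop :=
  ∃ t ∈ T, x ∈ t.cells ∧ y ∈ t.cells

lemma Same.symm' {T x y} (h : Same T x y) : Same T y x := by
  obtain ⟨t, ht, h1, h2⟩ := h; exact ⟨t, ht, h2, h1⟩

lemma tile_card_le (t : Tile) : t.cells.card ≤ 2 := by
  cases t <;> simp [Tile.cells] <;>
    exact le_trans (Finset.card_insert_le _ _) (by simp)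

lemma same_adj {T : Finset Tile} {x y : Cell} (h : Same T x y) :
    x = y ∨ y = (x.1, x.2 + 1) ∨ y = (x.1, x.2 - 1) ∨
    y = (x.1 + 1, x.2) ∨ y = (x.1 - 1, x.2) := by
  obtain ⟨t, _, hx, hy⟩ := h
  cases t with
  | mono c =>
      simp [Tile.cells] at hx hy; subst hx; subst hy; left; rfl
  | hdom c =>
      simp [Tile.cells] at hx hy
      rcases hx with hx | hx <;> rcases hy with hy | hy <;> subst hx <;> subst hy <;>
        simp [Prod.ext_iff] <;> omega
  | vdom c =>
      simp [Tile.cells] at hx hy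
      rcases hx with hx | hx <;> rcases hy with hy | hy <;> subst hx <;> subst hy <;>
        simp [Prod.ext_iff] <;> omega

section Main

variable {n : ℕ} {T : Finset Tile}

lemma mem_grid {a b : ℤ} : (a, b) ∈ grid n n ↔ 0 ≤ a ∧ a < n ∧ 0 ≤ b ∧ b < n := by
  simp [grid, Finset.mem_Ico, and_assoc]

variable (hcov : IsCovering T (grid n n))

include hcov in
lemma cell_mem_grid {t : Tile} (ht : t ∈ T) {x : Cell} (hx : x ∈ t.cells) :
    x ∈ grid n n := (hcov.2 x).mpr ⟨t, ht, hx⟩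

include hcov in
lemma same_self {x : Cell} (hx : x ∈ grid n n) : Same T x x := by
  obtain ⟨t, ht, h⟩ := (hcov.2 x).mp hx; exact ⟨t, ht, h, h⟩

include hcov in
lemma same_mem_grid {x y : Cell} (h : Same T x y) : y ∈ grid n n := by
  obtain ⟨t, ht, _, hy⟩ := h; exact cell_mem_grid hcov ht hy

include hcov in
lemma same_three {x y z : Cell} (h1 : Same T x y) (h2 : Same T x z)
    (hxy : x ≠ y) (hxz : x ≠ z) (hyz : y ≠ z) : False := by
  obtain ⟨t1, ht1, hx1, hy1⟩ := h1
  obtain ⟨t2, ht2, hx2, hz2⟩ := h2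
  have heq : t1 = t2 := by
    by_contra hne
    exact (Finset.disjoint_left.mp (hcov.1 t1 ht1 t2 ht2 hne) hx1) hx2
  subst heq
  have hsub : ({x, y, z} : Finset Cell) ⊆ t1.cells := by
    intro w hw; simp at hw; rcases hw with rfl | rfl | rfl <;> assumption
  have h3 : ({x, y, z} : Finset Cell).card = 3 := by
    rw [Finset.card_insert_of_notMem (by simp [hxy, hxz]),
        Finset.card_insert_of_notMem (by simp [hyz]), Finset.card_singleton]
  have := Finset.card_le_card hsub
  have := tile_card_le t1
  omega

variable (hfm : ∀ v : Cell, ¬ FourMeet T v)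

include hcov hfm in
lemma vertex_lemma {p q : ℤ} (hA : (p, q) ∈ grid n n) (hB : (p, q + 1) ∈ grid n n)
    (hC : (p + 1, q) ∈ grid n n) (hD : (p + 1, q + 1) ∈ grid n n) :
    Same T (p, q) (p, q + 1) ∨ Same T (p, q) (p + 1, q) ∨
    Same T (p, q + 1) (p + 1, q + 1) ∨ Same T (p + 1, q) (p + 1, q + 1) := by
  obtain ⟨tA, htA, hmA⟩ := (hcov.2 _).mp hA
  obtain ⟨tB, htB, hmB⟩ := (hcov.2 _).mp hB
  obtain ⟨tC, htC, hmC⟩ := (hcov.2 _).mp hC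
  obtain ⟨tD, htD, hmD⟩ := (hcov.2 _).mp hD
  by_contra hcon
  push_neg at hcon
  obtain ⟨h1, h2, h3, h4⟩ := hcon
  have key : ¬ (tA ≠ tB ∧ tA ≠ tC ∧ tA ≠ tD ∧ tB ≠ tC ∧ tB ≠ tD ∧ tC ≠ tD) := by
    intro hdist
    apply hfm (p + 1, q + 1)
    refine ⟨tA, htA, tB, htB, tC, htC, tD, htD, ?_, ?_, ?_, ?_, hdist⟩
    · simpa using hmA
    · simpa using hmB
    · simpa using hmC
    · simpa using hmD
  -- from key, some pair of tiles is equal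
  by_cases e1 : tA = tB
  · exact h1 ⟨tA, htA, hmA, e1 ▸ hmB⟩
  by_cases e2 : tA = tC
  · exact h2 ⟨tA, htA, hmA, e2 ▸ hmC⟩
  by_cases e3 : tA = tD
  · -- diagonal: impossible
    have : Same T (p, q) (p + 1, q + 1) := ⟨tA, htA, hmA, e3 ▸ hmD⟩
    rcases same_adj this with h | h | h | h | h <;> simp [Prod.ext_iff] at h <;> omega
  by_cases e4 : tB = tC
  · have : Same T (p, q + 1) (p + 1, q) := ⟨tB, htB, hmB, e4 ▸ hmC⟩
    rcases same_adj this with h | h | h | h | h <;> simp [Prod.ext_iff] at h <;> omega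
  by_cases e5 : tB = tD
  · exact h3 ⟨tB, htB, hmB, e5 ▸ hmD⟩
  by_cases e6 : tC = tD
  · exact h4 ⟨tC, htC, hmC, e6 ▸ hmD⟩
  exact key ⟨e1, e2, e3, e4, e5, e6⟩


-- directional predicates
abbrev FreeU (T : Finset Tile) (x : Cell) : Prop := ¬ Same T x (x.1 - 1, x.2)
abbrev FreeD (T : Finset Tile) (x : Cell) : Prop := ¬ Same T x (x.1 + 1, x.2)
abbrev FreeL (T : Finset Tile) (x : Cell) : Prop := ¬ Same T x (x.1, x.2 - 1)
abbrev FreeR (T : Finset Tile) (x : Cell) : Prop := ¬ Same T x (x.1, x.2 + 1)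

abbrev UL (T : Finset Tile) (x : Cell) : Prop :=
  Same T x (x.1 - 1, x.2) ∨ Same T x (x.1, x.2 - 1)
abbrev UR (T : Finset Tile) (x : Cell) : Prop :=
  Same T x (x.1 - 1, x.2) ∨ Same T x (x.1, x.2 + 1)
abbrev DL (T : Finset Tile) (x : Cell) : Prop :=
  Same T x (x.1 + 1, x.2) ∨ Same T x (x.1, x.2 - 1)
abbrev DR (T : Finset Tile) (x : Cell) : Prop :=
  Same T x (x.1 + 1, x.2) ∨ Same T x (x.1, x.2 + 1)

include hcov in
lemma free_of_partner {x p q : Cell} (h : Same T x p) (hxp : x ≠ p)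
    (hqp : q ≠ p) (hqx : q ≠ x) : ¬ Same T x q :=
  fun h2 => same_three hcov h h2 hxp (Ne.symm hqx) (fun e => hqp e.symm)

include hcov in
lemma UL.freeDR {a b : ℤ} (h : UL T (a, b)) : FreeD T (a, b) ∧ FreeR T (a, b) := by
  rcases h with h | h <;>
    exact ⟨free_of_partner hcov h (by simp [Prod.ext_iff] <;> omega)
        (by simp [Prod.ext_iff] <;> omega) (by simp [Prod.ext_iff] <;> omega),
      free_of_partner hcov h (by simp [Prod.ext_iff] <;> omega)
        (by simp [Prod.ext_iff] <;> omega) (by simp [Prod.ext_iff] <;> omega)⟩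

include hcov in
lemma UR.freeDL {a b : ℤ} (h : UR T (a, b)) : FreeD T (a, b) ∧ FreeL T (a, b) := by
  rcases h with h | h <;>
    exact ⟨free_of_partner hcov h (by simp [Prod.ext_iff] <;> omega)
        (by simp [Prod.ext_iff] <;> omega) (by simp [Prod.ext_iff] <;> omega),
      free_of_partner hcov h (by simp [Prod.ext_iff] <;> omega)
        (by simp [Prod.ext_iff] <;> omega) (by simp [Prod.ext_iff] <;> omega)⟩

include hcov in
lemma DL.freeUR {a b : ℤ} (h : DL T (a, b)) : FreeU T (a, b) ∧ FreeR T (a, b) := by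
  rcases h with h | h <;>
    exact ⟨free_of_partner hcov h (by simp [Prod.ext_iff] <;> omega)
        (by simp [Prod.ext_iff] <;> omega) (by simp [Prod.ext_iff] <;> omega),
      free_of_partner hcov h (by simp [Prod.ext_iff] <;> omega)
        (by simp [Prod.ext_iff] <;> omega) (by simp [Prod.ext_iff] <;> omega)⟩

include hcov in
lemma DR.freeUL {a b : ℤ} (h : DR T (a, b)) : FreeU T (a, b) ∧ FreeL T (a, b) := by
  rcases h with h | h <;>
    exact ⟨free_of_partner hcov h (by simp [Prod.ext_iff] <;> omega)
        (by simp [Prod.ext_iff] <;> omega) (by simp [Prod.ext_iff] <;> omega),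
      free_of_partner hcov h (by simp [Prod.ext_iff] <;> omega)
        (by simp [Prod.ext_iff] <;> omega) (by simp [Prod.ext_iff] <;> omega)⟩

include hcov hfm in
lemma stepUL {a b : ℤ} (hc : (a, b) ∈ grid n n) (hg : (a + 1, b + 1) ∈ grid n n)
    (h1 : FreeD T (a, b)) (h2 : FreeR T (a, b)) : UL T (a + 1, b + 1) := by
  have hB : (a, b + 1) ∈ grid n n := by
    rw [mem_grid] at *; omega
  have hC : (a + 1, b) ∈ grid n n := by rw [mem_grid] at *; omega
  rcases vertex_lemma hcov hfm hc hB hC hg with h | h | h | h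
  · exact absurd h h2
  · exact absurd h h1
  · exact Or.inl (by simpa using h.symm')
  · exact Or.inr (by simpa using h.symm')

include hcov hfm in
lemma stepUR {a b : ℤ} (hc : (a, b) ∈ grid n n) (hg : (a + 1, b - 1) ∈ grid n n)
    (h1 : FreeD T (a, b)) (h2 : FreeL T (a, b)) : UR T (a + 1, b - 1) := by
  have hA : (a, b - 1) ∈ grid n n := by rw [mem_grid] at *; omega
  have hD : (a + 1, b) ∈ grid n n := by rw [mem_grid] at *; omega
  have := vertex_lemma hcov hfm (p := a) (q := b - 1) hA (by simpa using hc)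
    hg (by simpa using hD)
  rcases this with h | h | h | h
  · exact absurd (by simpa using h.symm') h2
  · exact Or.inl (by simpa using h.symm')
  · exact absurd (by simpa using h) h1
  · exact Or.inr (by simpa using h)

include hcov hfm in
lemma stepDR {a b : ℤ} (hc : (a, b) ∈ grid n n) (hg : (a - 1, b - 1) ∈ grid n n)
    (h1 : FreeU T (a, b)) (h2 : FreeL T (a, b)) : DR T (a - 1, b - 1) := by
  have hB : (a - 1, b) ∈ grid n n := by rw [mem_grid] at *; omega
  have hC : (a, b - 1) ∈ grid n n := by rw [mem_grid] at *; omega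
  have := vertex_lemma hcov hfm (p := a - 1) (q := b - 1) hg (by simpa using hB)
    (by simpa using hC) (by simpa using hc)
  rcases this with h | h | h | h
  · exact Or.inr (by simpa using h)
  · exact Or.inl (by simpa using h)
  · exact absurd (by simpa using h.symm') h1
  · exact absurd (by simpa using h.symm') h2

include hcov hfm in
lemma stepDL {a b : ℤ} (hc : (a, b) ∈ grid n n) (hg : (a - 1, b + 1) ∈ grid n n)
    (h1 : FreeU T (a, b)) (h2 : FreeR T (a, b)) : DL T (a - 1, b + 1) := by
  have hA : (a - 1, b) ∈ grid n n := by rw [mem_grid] at *; omega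
  have hD : (a, b + 1) ∈ grid n n := by rw [mem_grid] at *; omega
  have := vertex_lemma hcov hfm (p := a - 1) (q := b) hA (by simpa using hg)
    (by simpa using hc) (by simpa using hD)
  rcases this with h | h | h | h
  · exact Or.inr (by simpa using h.symm')
  · exact absurd (by simpa using h.symm') h1
  · exact Or.inl (by simpa using h)
  · exact absurd (by simpa using h) h2

include hcov hfm in
lemma chainUL {a b : ℤ} (hc : (a, b) ∈ grid n n)
    (h1 : FreeD T (a, b)) (h2 : FreeR T (a, b)) :
    ∀ j : ℤ, 1 ≤ j → (a + j, b + j) ∈ grid n n → UL T (a + j, b + j) := by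
  intro j hj
  refine Int.le_induction
    (motive := fun j _ => (a + j, b + j) ∈ grid n n → UL T (a + j, b + j)) ?_ ?_ j hj
  · intro hg
    have := stepUL hcov hfm hc (by convert hg using 2 <;> ring) h1 h2
    convert this using 2 <;> ring
  · intro j hj ih hg
    have hmid : (a + j, b + j) ∈ grid n n := by rw [mem_grid] at *; omega
    have hprev := ih hmid
    obtain ⟨f1, f2⟩ := UL.freeDR hcov hprev
    have := stepUL hcov hfm hmid (by rw [mem_grid] at *; omega) f1 f2
    convert this using 2 <;> ring

include hcov hfm in
lemma chainUR {a b : ℤ} (hc : (a, b) ∈ grid n n)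
    (h1 : FreeD T (a, b)) (h2 : FreeL T (a, b)) :
    ∀ j : ℤ, 1 ≤ j → (a + j, b - j) ∈ grid n n → UR T (a + j, b - j) := by
  intro j hj
  refine Int.le_induction
    (motive := fun j _ => (a + j, b - j) ∈ grid n n → UR T (a + j, b - j)) ?_ ?_ j hj
  · intro hg
    have := stepUR hcov hfm hc (by convert hg using 2 <;> ring) h1 h2
    convert this using 2 <;> ring
  · intro j hj ih hg
    have hmid : (a + j, b - j) ∈ grid n n := by rw [mem_grid] at *; omega
    have hprev := ih hmid
    obtain ⟨f1, f2⟩ := UR.freeDL hcov hprev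
    have := stepUR hcov hfm hmid (by rw [mem_grid] at *; omega) f1 f2
    convert this using 2 <;> ring

include hcov hfm in
lemma chainDR {a b : ℤ} (hc : (a, b) ∈ grid n n)
    (h1 : FreeU T (a, b)) (h2 : FreeL T (a, b)) :
    ∀ j : ℤ, 1 ≤ j → (a - j, b - j) ∈ grid n n → DR T (a - j, b - j) := by
  intro j hj
  refine Int.le_induction
    (motive := fun j _ => (a - j, b - j) ∈ grid n n → DR T (a - j, b - j)) ?_ ?_ j hj
  · intro hg
    have := stepDR hcov hfm hc (by convert hg using 2 <;> ring) h1 h2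
    convert this using 2 <;> ring
  · intro j hj ih hg
    have hmid : (a - j, b - j) ∈ grid n n := by rw [mem_grid] at *; omega
    have hprev := ih hmid
    obtain ⟨f1, f2⟩ := DR.freeUL hcov hprev
    have := stepDR hcov hfm hmid (by rw [mem_grid] at *; omega) f1 f2
    convert this using 2 <;> ring

include hcov hfm in
lemma chainDL {a b : ℤ} (hc : (a, b) ∈ grid n n)
    (h1 : FreeU T (a, b)) (h2 : FreeR T (a, b)) :
    ∀ j : ℤ, 1 ≤ j → (a - j, b + j) ∈ grid n n → DL T (a - j, b + j) := by
  intro j hj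
  refine Int.le_induction
    (motive := fun j _ => (a - j, b + j) ∈ grid n n → DL T (a - j, b + j)) ?_ ?_ j hj
  · intro hg
    have := stepDL hcov hfm hc (by convert hg using 2 <;> ring) h1 h2
    convert this using 2 <;> ring
  · intro j hj ih hg
    have hmid : (a - j, b + j) ∈ grid n n := by rw [mem_grid] at *; omega
    have hprev := ih hmid
    obtain ⟨f1, f2⟩ := DL.freeUR hcov hprev
    have := stepDL hcov hfm hmid (by rw [mem_grid] at *; omega) f1 f2
    convert this using 2 <;> ring


-- ## main mutual induction
include hcov hfm in
lemma mainVH : ∀ k : ℕ, ∀ x1 x2 y1 y2 : ℤ,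
    (((x1, x2) ∈ grid n n) → ((y1, y2) ∈ grid n n) →
     x1 + x2 + y1 + y2 = 2 * ((n : ℤ) - 1) →
     x1 + x2 ≤ y1 + y2 →
     (x1, x2) ≠ (y1, y2) →
     (y1 - y2) - (x1 - x2) = 2 * (k : ℤ) →
     FreeD T (x1, x2) → FreeR T (x1, x2) → FreeL T (x1, x2) →
     FreeU T (y1, y2) → FreeR T (y1, y2) → FreeL T (y1, y2) → False) ∧
    (((x1, x2) ∈ grid n n) → ((y1, y2) ∈ grid n n) →
     x1 + x2 + y1 + y2 = 2 * ((n : ℤ) - 1) →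
     x1 + x2 ≤ y1 + y2 →
     (x1, x2) ≠ (y1, y2) →
     (x1 - x2) - (y1 - y2) = 2 * (k : ℤ) →
     FreeD T (x1, x2) → FreeU T (x1, x2) → FreeR T (x1, x2) →
     FreeD T (y1, y2) → FreeU T (y1, y2) → FreeL T (y1, y2) → False) := by
  intro k
  induction k using Nat.strong_induction_on with
  | _ k ih =>
  intro x1 x2 y1 y2
  constructor
  -- ########## part V ##########
  · intro hgx hgy hsum hle hne hk fDX fRX fLX fUY fRY fLY
    have hgx' := mem_grid.mp hgx
    have hgy' := mem_grid.mp hgy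
    rcases eq_or_lt_of_le (show x1 + x2 ≤ (n : ℤ) - 1 by omega) with hS | hS
    · -- same (central) antidiagonal
      have hy1 : y1 = x1 + (k : ℤ) := by omega
      have hk1 : (1 : ℤ) ≤ (k : ℤ) := by
        rcases Nat.eq_zero_or_pos k with h0 | h0
        · exfalso; apply hne; subst h0
          simp only [Prod.mk.injEq]; constructor <;> omega
        · exact_mod_cast h0
      have hur := chainUR hcov hfm hgx fDX fLX (k : ℤ) hk1
        (by rw [show ((x1 + (k:ℤ), x2 - (k:ℤ))) = (y1, y2) by
              simp only [Prod.mk.injEq]; exact ⟨by omega, by omega⟩]; exact hgy)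
      rw [show ((x1 + (k:ℤ), x2 - (k:ℤ))) = (y1, y2) by
            simp only [Prod.mk.injEq]; exact ⟨by omega, by omega⟩] at hur
      rcases hur with h | h
      · exact fUY h
      · exact fRY h
    · -- x strictly below the central antidiagonal
      set S : ℤ := (n : ℤ) - 1 with hSdef
      have hk0 : (1 : ℤ) ≤ S - (x1 + x2) := by omega
      set p1 : ℤ := x1 + (S - (x1 + x2)) with hp1
      set p2 : ℤ := x2 + (S - (x1 + x2)) with hp2
      have hgp : (p1, p2) ∈ grid n n := by rw [mem_grid]; omega
      have hULp : UL T (p1, p2) := by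
        have := chainUL hcov hfm hgx fDX fRX (S - (x1 + x2)) hk0 hgp
        exact this
      by_cases hpy : p1 = y1
      · have hpy2 : p2 = y2 := by omega
        rw [hpy, hpy2] at hULp
        rcases hULp with h | h
        · exact fUY h
        · exact fLY h
      · have hplt : p1 < y1 := by omega
        have hDLp : DL T (p1, p2) := by
          have := chainDL hcov hfm hgy fUY fRY (y1 - p1) (by omega)
            (by rw [show (y1 - (y1 - p1), y2 + (y1 - p1)) = (p1, p2) by
                  simp only [Prod.mk.injEq]; exact ⟨by omega, by omega⟩]; exact hgp)
          rwa [show (y1 - (y1 - p1), y2 + (y1 - p1)) = (p1, p2) by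
                  simp only [Prod.mk.injEq]; exact ⟨by omega, by omega⟩] at this
        -- combine UL and DL: partner must be the left cell
        have hW : Same T (p1, p2) (p1, p2 - 1) := by
          rcases hULp with hU | hU
          · rcases hDLp with hD | hD
            · exact absurd hD (by
                apply free_of_partner hcov hU (by simp [Prod.ext_iff] <;> omega)
                  (by simp [Prod.ext_iff] <;> omega) (by simp [Prod.ext_iff] <;> omega))
            · exact absurd hD (by
                apply free_of_partner hcov hU (by simp [Prod.ext_iff] <;> omega)
                  (by simp [Prod.ext_iff] <;> omega) (by simp [Prod.ext_iff] <;> omega))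
          · exact hU
        have hgW : (p1, p2 - 1) ∈ grid n n := same_mem_grid hcov hW
        have hWp : Same T (p1, p2 - 1) (p1, p2) := hW.symm'
        have fUW : FreeU T (p1, p2 - 1) := free_of_partner hcov hWp
          (by simp [Prod.ext_iff] <;> omega) (by simp [Prod.ext_iff] <;> omega)
          (by simp [Prod.ext_iff] <;> omega)
        have fDW : FreeD T (p1, p2 - 1) := free_of_partner hcov hWp
          (by simp [Prod.ext_iff] <;> omega) (by simp [Prod.ext_iff] <;> omega)
          (by simp [Prod.ext_iff] <;> omega)
        have fLW : FreeL T (p1, p2 - 1) := free_of_partner hcov hWp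
          (by simp [Prod.ext_iff] <;> omega) (by simp [Prod.ext_iff] <;> omega)
          (by simp [Prod.ext_iff] <;> omega)
        -- mirror side
        set q1 : ℤ := y1 - (S - (x1 + x2)) with hq1
        set q2 : ℤ := y2 - (S - (x1 + x2)) with hq2
        have hgq : (q1, q2) ∈ grid n n := by rw [mem_grid]; omega
        have hDRq : DR T (q1, q2) := by
          have := chainDR hcov hfm hgy fUY fLY (S - (x1 + x2)) hk0 hgq
          exact this
        by_cases hqx : q1 = x1
        · have hqx2 : q2 = x2 := by omega
          rw [hqx, hqx2] at hDRq
          rcases hDRq with h | h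
          · exact fDX h
          · exact fRX h
        · have hqgt : x1 < q1 := by omega
          have hURq : UR T (q1, q2) := by
            have := chainUR hcov hfm hgx fDX fLX (q1 - x1) (by omega)
              (by rw [show (x1 + (q1 - x1), x2 - (q1 - x1)) = (q1, q2) by
                    simp only [Prod.mk.injEq]; exact ⟨by omega, by omega⟩]; exact hgq)
            rwa [show (x1 + (q1 - x1), x2 - (q1 - x1)) = (q1, q2) by
                    simp only [Prod.mk.injEq]; exact ⟨by omega, by omega⟩] at this
          have hR : Same T (q1, q2) (q1, q2 + 1) := by
            rcases hURq with hU | hU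
            · rcases hDRq with hD | hD
              · exact absurd hD (by
                  apply free_of_partner hcov hU (by simp [Prod.ext_iff] <;> omega)
                    (by simp [Prod.ext_iff] <;> omega) (by simp [Prod.ext_iff] <;> omega))
              · exact absurd hD (by
                  apply free_of_partner hcov hU (by simp [Prod.ext_iff] <;> omega)
                    (by simp [Prod.ext_iff] <;> omega) (by simp [Prod.ext_iff] <;> omega))
            · exact hU
          have hgR : (q1, q2 + 1) ∈ grid n n := same_mem_grid hcov hR
          have hRq : Same T (q1, q2 + 1) (q1, q2) := hR.symm'
          have fUR' : FreeU T (q1, q2 + 1) := free_of_partner hcov hRq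
            (by simp [Prod.ext_iff] <;> omega) (by simp [Prod.ext_iff] <;> omega)
            (by simp [Prod.ext_iff] <;> omega)
          have fDR' : FreeD T (q1, q2 + 1) := free_of_partner hcov hRq
            (by simp [Prod.ext_iff] <;> omega) (by simp [Prod.ext_iff] <;> omega)
            (by simp [Prod.ext_iff] <;> omega)
          have fRR' : FreeR T (q1, q2 + 1) := free_of_partner hcov hRq
            (by simp [Prod.ext_iff] <;> omega) (by simp [Prod.ext_iff] <;> omega)
            (by simp [Prod.ext_iff] <;> omega)
          have hk1 : 1 ≤ k := by
            rcases Nat.eq_zero_or_pos k with h0 | h0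
            · exfalso; apply hpy; omega
            · exact h0
          -- coincidence of the two new cells is impossible
          by_cases hco : (q1, q2 + 1) = (p1, p2 - 1)
          · rw [hco] at hR
            exact same_three hcov hW.symm' hR.symm'
              (by simp [Prod.ext_iff] <;> omega) (by simp [Prod.ext_iff] <;> omega)
              (by simp [Prod.ext_iff] <;> omega)
          · exact (ih (k - 1) (by omega) q1 (q2 + 1) p1 (p2 - 1)).2 hgR hgW
              (by omega) (by omega) hco (by push_cast; omega)
              fDR' fUR' fRR' fDW fUW fLW
  -- ########## part H ##########
  · intro hgx hgy hsum hle hne hk fDX fUX fRX fDY fUY fLY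
    have hgx' := mem_grid.mp hgx
    have hgy' := mem_grid.mp hgy
    rcases eq_or_lt_of_le (show x1 + x2 ≤ (n : ℤ) - 1 by omega) with hS | hS
    · have hx1 : x1 = y1 + (k : ℤ) := by omega
      have hk1 : (1 : ℤ) ≤ (k : ℤ) := by
        rcases Nat.eq_zero_or_pos k with h0 | h0
        · exfalso; apply hne; subst h0
          simp only [Prod.mk.injEq]; constructor <;> omega
        · exact_mod_cast h0
      have hur := chainUR hcov hfm hgy fDY fLY (k : ℤ) hk1
        (by rw [show ((y1 + (k:ℤ), y2 - (k:ℤ))) = (x1, x2) by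
              simp only [Prod.mk.injEq]; exact ⟨by omega, by omega⟩]; exact hgx)
      rw [show ((y1 + (k:ℤ), y2 - (k:ℤ))) = (x1, x2) by
            simp only [Prod.mk.injEq]; exact ⟨by omega, by omega⟩] at hur
      rcases hur with h | h
      · exact fUX h
      · exact fRX h
    · set S : ℤ := (n : ℤ) - 1 with hSdef
      have hk0 : (1 : ℤ) ≤ S - (x1 + x2) := by omega
      set p1 : ℤ := x1 + (S - (x1 + x2)) with hp1
      set p2 : ℤ := x2 + (S - (x1 + x2)) with hp2
      have hgp : (p1, p2) ∈ grid n n := by rw [mem_grid]; omega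
      have hULp : UL T (p1, p2) := by
        have := chainUL hcov hfm hgx fDX fRX (S - (x1 + x2)) hk0 hgp
        exact this
      by_cases hpy : p1 = y1
      · have hpy2 : p2 = y2 := by omega
        rw [hpy, hpy2] at hULp
        rcases hULp with h | h
        · exact fUY h
        · exact fLY h
      · have hplt : y1 < p1 := by omega
        have hURp : UR T (p1, p2) := by
          have := chainUR hcov hfm hgy fDY fLY (p1 - y1) (by omega)
            (by rw [show (y1 + (p1 - y1), y2 - (p1 - y1)) = (p1, p2) by
                  simp only [Prod.mk.injEq]; exact ⟨by omega, by omega⟩]; exact hgp)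
          rwa [show (y1 + (p1 - y1), y2 - (p1 - y1)) = (p1, p2) by
                  simp only [Prod.mk.injEq]; exact ⟨by omega, by omega⟩] at this
        -- combine UL and UR: partner must be the upper cell
        have hU : Same T (p1, p2) (p1 - 1, p2) := by
          rcases hULp with h1 | h1
          · exact h1
          · rcases hURp with h2 | h2
            · exact absurd h1 (by
                apply free_of_partner hcov h2 (by simp [Prod.ext_iff] <;> omega)
                  (by simp [Prod.ext_iff] <;> omega) (by simp [Prod.ext_iff] <;> omega))
            · exact absurd h1 (by
                apply free_of_partner hcov h2 (by simp [Prod.ext_iff] <;> omega)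
                  (by simp [Prod.ext_iff] <;> omega) (by simp [Prod.ext_iff] <;> omega))
        have hgU : (p1 - 1, p2) ∈ grid n n := same_mem_grid hcov hU
        have hUp : Same T (p1 - 1, p2) (p1, p2) := hU.symm'
        have fUU : FreeU T (p1 - 1, p2) := free_of_partner hcov hUp
          (by simp [Prod.ext_iff] <;> omega) (by simp [Prod.ext_iff] <;> omega)
          (by simp [Prod.ext_iff] <;> omega)
        have fLU : FreeL T (p1 - 1, p2) := free_of_partner hcov hUp
          (by simp [Prod.ext_iff] <;> omega) (by simp [Prod.ext_iff] <;> omega)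
          (by simp [Prod.ext_iff] <;> omega)
        have fRU : FreeR T (p1 - 1, p2) := free_of_partner hcov hUp
          (by simp [Prod.ext_iff] <;> omega) (by simp [Prod.ext_iff] <;> omega)
          (by simp [Prod.ext_iff] <;> omega)
        -- mirror side
        set q1 : ℤ := y1 - (S - (x1 + x2)) with hq1
        set q2 : ℤ := y2 - (S - (x1 + x2)) with hq2
        have hgq : (q1, q2) ∈ grid n n := by rw [mem_grid]; omega
        have hDRq : DR T (q1, q2) := by
          have := chainDR hcov hfm hgy fUY fLY (S - (x1 + x2)) hk0 hgq
          exact this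
        by_cases hqx : q1 = x1
        · have hqx2 : q2 = x2 := by omega
          rw [hqx, hqx2] at hDRq
          rcases hDRq with h | h
          · exact fDX h
          · exact fRX h
        · have hqlt : q1 < x1 := by omega
          have hDLq : DL T (q1, q2) := by
            have := chainDL hcov hfm hgx fUX fRX (x1 - q1) (by omega)
              (by rw [show (x1 - (x1 - q1), x2 + (x1 - q1)) = (q1, q2) by
                    simp only [Prod.mk.injEq]; exact ⟨by omega, by omega⟩]; exact hgq)
            rwa [show (x1 - (x1 - q1), x2 + (x1 - q1)) = (q1, q2) by
                    simp only [Prod.mk.injEq]; exact ⟨by omega, by omega⟩] at this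
          have hD : Same T (q1, q2) (q1 + 1, q2) := by
            rcases hDRq with h1 | h1
            · exact h1
            · rcases hDLq with h2 | h2
              · exact absurd h1 (by
                  apply free_of_partner hcov h2 (by simp [Prod.ext_iff] <;> omega)
                    (by simp [Prod.ext_iff] <;> omega) (by simp [Prod.ext_iff] <;> omega))
              · exact absurd h1 (by
                  apply free_of_partner hcov h2 (by simp [Prod.ext_iff] <;> omega)
                    (by simp [Prod.ext_iff] <;> omega) (by simp [Prod.ext_iff] <;> omega))
          have hgD : (q1 + 1, q2) ∈ grid n n := same_mem_grid hcov hD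
          have hDq : Same T (q1 + 1, q2) (q1, q2) := hD.symm'
          have fDD : FreeD T (q1 + 1, q2) := free_of_partner hcov hDq
            (by simp [Prod.ext_iff] <;> omega) (by simp [Prod.ext_iff] <;> omega)
            (by simp [Prod.ext_iff] <;> omega)
          have fLD : FreeL T (q1 + 1, q2) := free_of_partner hcov hDq
            (by simp [Prod.ext_iff] <;> omega) (by simp [Prod.ext_iff] <;> omega)
            (by simp [Prod.ext_iff] <;> omega)
          have fRD : FreeR T (q1 + 1, q2) := free_of_partner hcov hDq
            (by simp [Prod.ext_iff] <;> omega) (by simp [Prod.ext_iff] <;> omega)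
            (by simp [Prod.ext_iff] <;> omega)
          have hk1 : 1 ≤ k := by
            rcases Nat.eq_zero_or_pos k with h0 | h0
            · exfalso; apply hpy; omega
            · exact h0
          by_cases hco : (q1 + 1, q2) = (p1 - 1, p2)
          · rw [hco] at hD
            exact same_three hcov hU.symm' hD.symm'
              (by simp [Prod.ext_iff] <;> omega) (by simp [Prod.ext_iff] <;> omega)
              (by simp [Prod.ext_iff] <;> omega)
          · exact (ih (k - 1) (by omega) (q1 + 1) q2 (p1 - 1) p2).1 hgD hgU
              (by omega) (by omega) hco (by push_cast; omega)
              fDD fRD fLD fUU fRU fLU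


include hcov in
lemma mono_free {c : Cell} (ht : Tile.mono c ∈ T) : ∀ z, z ≠ c → ¬ Same T c z := by
  rintro z hz ⟨t, htT, hc, hzm⟩
  have heq : t = Tile.mono c := by
    by_contra hne
    exact (Finset.disjoint_left.mp (hcov.1 t htT _ ht hne) hc) (by simp [Tile.cells])
  subst heq
  simp [Tile.cells] at hzm
  exact hz hzm

include hcov hfm in
lemma mono_cells_samesum (x1 x2 y1 y2 : ℤ)
    (hgx : (x1, x2) ∈ grid n n) (hgy : (y1, y2) ∈ grid n n)
    (hsum : x1 + x2 = y1 + y2) (hne : ((x1, x2) : Cell) ≠ (y1, y2))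
    (hfx : ∀ z, z ≠ ((x1, x2) : Cell) → ¬ Same T (x1, x2) z)
    (hfy : ∀ z, z ≠ ((y1, y2) : Cell) → ¬ Same T (y1, y2) z) : False := by
  rcases lt_trichotomy x1 y1 with hlt | heq | hlt
  · have := chainUR hcov hfm hgx
      (hfx _ (by simp [Prod.ext_iff] <;> omega)) (hfx _ (by simp [Prod.ext_iff] <;> omega))
      (y1 - x1) (by omega)
      (by rw [show (x1 + (y1 - x1), x2 - (y1 - x1)) = ((y1, y2) : Cell) by
            simp only [Prod.mk.injEq]; exact ⟨by omega, by omega⟩]; exact hgy)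
    rw [show (x1 + (y1 - x1), x2 - (y1 - x1)) = ((y1, y2) : Cell) by
            simp only [Prod.mk.injEq]; exact ⟨by omega, by omega⟩] at this
    rcases this with h | h
    · exact hfy _ (by simp [Prod.ext_iff] <;> omega) h
    · exact hfy _ (by simp [Prod.ext_iff] <;> omega) h
  · exact hne (by simp only [Prod.mk.injEq]; exact ⟨heq, by omega⟩)
  · have := chainUR hcov hfm hgy
      (hfy _ (by simp [Prod.ext_iff] <;> omega)) (hfy _ (by simp [Prod.ext_iff] <;> omega))
      (x1 - y1) (by omega)
      (by rw [show (y1 + (x1 - y1), y2 - (x1 - y1)) = ((x1, x2) : Cell) by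
            simp only [Prod.mk.injEq]; exact ⟨by omega, by omega⟩]; exact hgx)
    rw [show (y1 + (x1 - y1), y2 - (x1 - y1)) = ((x1, x2) : Cell) by
            simp only [Prod.mk.injEq]; exact ⟨by omega, by omega⟩] at this
    rcases this with h | h
    · exact hfx _ (by simp [Prod.ext_iff] <;> omega) h
    · exact hfx _ (by simp [Prod.ext_iff] <;> omega) h

include hcov hfm in
lemma mono_cells_mirror (x1 x2 y1 y2 : ℤ)
    (hgx : (x1, x2) ∈ grid n n) (hgy : (y1, y2) ∈ grid n n)
    (hsum : x1 + x2 + y1 + y2 = 2 * ((n : ℤ) - 1)) (hle : x1 + x2 ≤ y1 + y2)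
    (hne : ((x1, x2) : Cell) ≠ (y1, y2))
    (hfx : ∀ z, z ≠ ((x1, x2) : Cell) → ¬ Same T (x1, x2) z)
    (hfy : ∀ z, z ≠ ((y1, y2) : Cell) → ¬ Same T (y1, y2) z) : False := by
  by_cases hd : x1 - x2 ≤ y1 - y2
  · obtain ⟨k, hk⟩ : ∃ k : ℕ, (y1 - y2) - (x1 - x2) = 2 * (k : ℤ) :=
      ⟨(((y1 - y2) - (x1 - x2)) / 2).toNat, by omega⟩
    exact (mainVH hcov hfm k x1 x2 y1 y2).1 hgx hgy hsum hle hne hk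
      (hfx _ (by simp [Prod.ext_iff] <;> omega)) (hfx _ (by simp [Prod.ext_iff] <;> omega))
      (hfx _ (by simp [Prod.ext_iff] <;> omega)) (hfy _ (by simp [Prod.ext_iff] <;> omega))
      (hfy _ (by simp [Prod.ext_iff] <;> omega)) (hfy _ (by simp [Prod.ext_iff] <;> omega))
  · obtain ⟨k, hk⟩ : ∃ k : ℕ, (x1 - x2) - (y1 - y2) = 2 * (k : ℤ) :=
      ⟨(((x1 - x2) - (y1 - y2)) / 2).toNat, by omega⟩
    exact (mainVH hcov hfm k x1 x2 y1 y2).2 hgx hgy hsum hle hne hk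
      (hfx _ (by simp [Prod.ext_iff] <;> omega)) (hfx _ (by simp [Prod.ext_iff] <;> omega))
      (hfx _ (by simp [Prod.ext_iff] <;> omega)) (hfy _ (by simp [Prod.ext_iff] <;> omega))
      (hfy _ (by simp [Prod.ext_iff] <;> omega)) (hfy _ (by simp [Prod.ext_iff] <;> omega))

end Main

def foldIdx (n : ℕ) : Tile → ℤ
  | Tile.mono c => min (c.1 + c.2) (2 * ((n : ℤ) - 1) - (c.1 + c.2))
  | _ => 0


theorem no_tatami_covering_of_square_with_too_many_monominoes
    (n m : ℕ) (hn : 0 < n) (hm : 0 < m) (hpar : m % 2 = n % 2) (h : m > n) :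
    ¬ ∃ T : Finset Tile, IsTatami T (grid n n) ∧ monoCount T = m := by
  rintro ⟨T, hT, hmc⟩
  obtain ⟨hcov, hfm⟩ := hT
  have hmaps : ∀ t ∈ T.filter Tile.IsMono, foldIdx n t ∈ Finset.Icc (0 : ℤ) ((n : ℤ) - 1) := by
    intro t htm
    rw [Finset.mem_filter] at htm
    obtain ⟨htT, hmono⟩ := htm
    cases t with
    | mono c =>
        have hg : c ∈ grid n n := cell_mem_grid hcov htT (by simp [Tile.cells])
        obtain ⟨a, b⟩ := c
        rw [mem_grid] at hg
        simp only [foldIdx, Finset.mem_Icc]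
        omega
    | hdom c => simp [Tile.IsMono] at hmono
    | vdom c => simp [Tile.IsMono] at hmono
  have hcardIcc : (Finset.Icc (0 : ℤ) ((n : ℤ) - 1)).card = n := by
    rw [Int.card_Icc]; omega
  have hlt : (Finset.Icc (0 : ℤ) ((n : ℤ) - 1)).card < (T.filter Tile.IsMono).card := by
    rw [hcardIcc]; unfold monoCount at hmc; omega
  obtain ⟨t1, ht1, t2, ht2, htne, hfeq⟩ :=
    Finset.exists_ne_map_eq_of_card_lt_of_maps_to hlt hmaps
  rw [Finset.mem_filter] at ht1 ht2
  obtain ⟨ht1T, hm1⟩ := ht1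
  obtain ⟨ht2T, hm2⟩ := ht2
  cases t1 with
  | hdom c => simp [Tile.IsMono] at hm1
  | vdom c => simp [Tile.IsMono] at hm1
  | mono c =>
    cases t2 with
    | hdom c' => simp [Tile.IsMono] at hm2
    | vdom c' => simp [Tile.IsMono] at hm2
    | mono c' =>
      obtain ⟨a1, b1⟩ := c
      obtain ⟨a2, b2⟩ := c'
      have hcne : ((a1, b1) : Cell) ≠ (a2, b2) := fun hc => htne (by rw [hc])
      have hg1 : ((a1, b1) : Cell) ∈ grid n n := cell_mem_grid hcov ht1T (by simp [Tile.cells])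
      have hg2 : ((a2, b2) : Cell) ∈ grid n n := cell_mem_grid hcov ht2T (by simp [Tile.cells])
      have hf1 := mono_free hcov ht1T
      have hf2 := mono_free hcov ht2T
      simp only [foldIdx] at hfeq
      have hg1' := mem_grid.mp hg1
      have hg2' := mem_grid.mp hg2
      by_cases hss : a1 + b1 = a2 + b2
      · exact mono_cells_samesum hcov hfm a1 b1 a2 b2 hg1 hg2 hss hcne hf1 hf2
      · have hmir : a1 + b1 + (a2 + b2) = 2 * ((n : ℤ) - 1) := by omega
        by_cases hord : a1 + b1 ≤ a2 + b2
        · exact mono_cells_mirror hcov hfm a1 b1 a2 b2 hg1 hg2 (by omega) hord hcne hf1 hf2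
        · exact mono_cells_mirror hcov hfm a2 b2 a1 b1 hg2 hg1 (by omega) (by omega)
            (Ne.symm hcne) hf2 hf1
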